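/- arXiv:1703.02371 — 5 statements merged into one kernel-verified Lean document; each statement's English description precedes it below -/
import Mathlib

section
/- The function Ψ(x) = 2(x+2)e^{−18/x} / (√(4x²+4x+1081) − 33) is monotonically increasing on [2, ∞). -/
open Real Set

private lemma Psi_hasDerivAt {x : ℝ} (hx : 2 < x) :
    HasDerivAt (fun x : ℝ =>
      2 * (x + 2) * Real.exp (-18 / x) / (Real.sqrt (4 * x ^ 2 + 4 * x + 1081) - 33))
      ((2 * Real.exp (-18 / x) * (x ^ 2 + 18 * x + 36) / x ^ 2 *
          (Real.sqrt (4 * x ^ 2 + 4 * x + 1081) - 33)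
        - 2 * (x + 2) * Real.exp (-18 / x) *
          ((4 * x + 2) / Real.sqrt (4 * x ^ 2 + 4 * x + 1081))) /
        (Real.sqrt (4 * x ^ 2 + 4 * x + 1081) - 33) ^ 2) x := by
  have hx0 : x ≠ 0 := by linarith
  have hQpos : (0:ℝ) < 4 * x ^ 2 + 4 * x + 1081 := by nlinarith
  have hS : Real.sqrt (4 * x ^ 2 + 4 * x + 1081) > 33 := by
    have : (33:ℝ) = Real.sqrt 1089 := by
      rw [show (1089:ℝ) = 33 ^ 2 by norm_num, Real.sqrt_sq (by norm_num)]
    rw [this]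
    apply Real.sqrt_lt_sqrt (by norm_num)
    nlinarith
  have hSpos : (0:ℝ) < Real.sqrt (4 * x ^ 2 + 4 * x + 1081) := by linarith
  have hQ : HasDerivAt (fun x : ℝ => 4 * x ^ 2 + 4 * x + 1081) (8 * x + 4) x := by
    have h1 := (((hasDerivAt_pow 2 x).const_mul 4).add
      ((hasDerivAt_id x).const_mul 4)).add_const (𝕜 := ℝ) 1081
    simp only [id_eq] at h1
    convert h1 using 1
    iterate 3 rfl
    push_cast; ring
  have hSd : HasDerivAt (fun x : ℝ => Real.sqrt (4 * x ^ 2 + 4 * x + 1081))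
      (1 / (2 * Real.sqrt (4 * x ^ 2 + 4 * x + 1081)) * (8 * x + 4)) x :=
    (Real.hasDerivAt_sqrt hQpos.ne').comp x hQ
  have hDd : HasDerivAt (fun x : ℝ => Real.sqrt (4 * x ^ 2 + 4 * x + 1081) - 33)
      (1 / (2 * Real.sqrt (4 * x ^ 2 + 4 * x + 1081)) * (8 * x + 4)) x :=
    hSd.sub_const 33
  have hinv : HasDerivAt (fun x : ℝ => -18 / x) (18 / x ^ 2) x := by
    have h1 : HasDerivAt (fun x : ℝ => (-18 : ℝ) * x⁻¹) ((-18) * (-(x ^ 2)⁻¹)) x :=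
      (hasDerivAt_inv hx0).const_mul (-18)
    have : (fun x : ℝ => -18 / x) = fun x : ℝ => (-18 : ℝ) * x⁻¹ := by
      funext y; ring
    rw [this]
    convert h1 using 1; field_simp
  have hexp : HasDerivAt (fun x : ℝ => Real.exp (-18 / x))
      (Real.exp (-18 / x) * (18 / x ^ 2)) x := hinv.exp
  have hN : HasDerivAt (fun x : ℝ => 2 * (x + 2) * Real.exp (-18 / x))
      ((2 * 1) * Real.exp (-18 / x) +
        (2 * (x + 2)) * (Real.exp (-18 / x) * (18 / x ^ 2))) x := by
    have h2 : HasDerivAt (fun x : ℝ => 2 * (x + 2)) (2 * 1) x :=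
      ((hasDerivAt_id x).add_const 2).const_mul 2
    exact h2.mul hexp
  have hden : Real.sqrt (4 * x ^ 2 + 4 * x + 1081) - 33 ≠ 0 := by linarith
  have := hN.div hDd hden
  convert this using 1
  iterate 3 rfl
  rw [div_eq_div_iff (by positivity) (by positivity)]
  field_simp
  ring

theorem Psi_monotoneOn :
    MonotoneOn (fun x : ℝ =>
      2 * (x + 2) * Real.exp (-18 / x) / (Real.sqrt (4 * x ^ 2 + 4 * x + 1081) - 33))
      (Set.Ici 2) := by
  have hint : interior (Set.Ici (2:ℝ)) = Set.Ioi 2 := interior_Ici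
  apply monotoneOn_of_deriv_nonneg (convex_Ici 2)
  · -- continuity
    apply ContinuousOn.div
    · apply ContinuousOn.mul
      · fun_prop
      · apply Real.continuous_exp.comp_continuousOn
        apply ContinuousOn.div continuousOn_const continuousOn_id
        intro y hy h
        simp only [id_eq] at h
        have h2 : (2:ℝ) ≤ y := hy
        rw [h] at h2; norm_num at h2
    · fun_prop
    · intro y hy
      have hy2 : (2:ℝ) ≤ y := hy
      have : Real.sqrt (4 * y ^ 2 + 4 * y + 1081) > 33 := by
        have h33 : (33:ℝ) = Real.sqrt 1089 := by
          rw [show (1089:ℝ) = 33 ^ 2 by norm_num, Real.sqrt_sq (by norm_num)]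
        rw [h33]
        apply Real.sqrt_lt_sqrt (by norm_num)
        nlinarith
      linarith
  · rw [hint]
    intro y hy
    exact (Psi_hasDerivAt hy).differentiableAt.differentiableWithinAt
  · rw [hint]
    intro x hx
    have hx2 : (2:ℝ) < x := hx
    rw [(Psi_hasDerivAt hx2).deriv]
    set S := Real.sqrt (4 * x ^ 2 + 4 * x + 1081) with hSdef
    have hx0 : (0:ℝ) < x := by linarith
    have hQpos : (0:ℝ) < 4 * x ^ 2 + 4 * x + 1081 := by nlinarith
    have hS2 : S ^ 2 = 4 * x ^ 2 + 4 * x + 1081 := Real.sq_sqrt hQpos.le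
    have hS33 : 33 < S := by
      have h33 : (33:ℝ) = Real.sqrt 1089 := by
        rw [show (1089:ℝ) = 33 ^ 2 by norm_num, Real.sqrt_sq (by norm_num)]
      rw [hSdef, h33]
      apply Real.sqrt_lt_sqrt (by norm_num)
      nlinarith
    have hSpos : (0:ℝ) < S := by linarith
    have hE : (0:ℝ) < Real.exp (-18 / x) := Real.exp_pos _
    -- key polynomial inequality
    have hP : 1089 * (x ^ 2 + 18 * x + 36) ^ 2 * (4 * x ^ 2 + 4 * x + 1081) ≤
        (66 * x ^ 3 + 1293 * x ^ 2 + 19602 * x + 38916) ^ 2 := by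
      nlinarith [pow_nonneg (by linarith : (0:ℝ) ≤ x - 2) 5,
        pow_nonneg (by linarith : (0:ℝ) ≤ x - 2) 4,
        pow_nonneg (by linarith : (0:ℝ) ≤ x - 2) 3,
        sq_nonneg (x - 2), (by linarith : (0:ℝ) ≤ x - 2)]
    have hApos : (0:ℝ) < 66 * x ^ 3 + 1293 * x ^ 2 + 19602 * x + 38916 := by nlinarith
    have hBpos : (0:ℝ) < 33 * (x ^ 2 + 18 * x + 36) * S := by positivity
    have hAB : 33 * (x ^ 2 + 18 * x + 36) * S ≤
        66 * x ^ 3 + 1293 * x ^ 2 + 19602 * x + 38916 := by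
      nlinarith [hP, hS2, hBpos, hApos]
    have hkey : x ^ 2 * (x + 2) * (4 * x + 2) ≤ (x ^ 2 + 18 * x + 36) * S * (S - 33) := by
      nlinarith [hAB, hS2]
    apply div_nonneg _ (sq_nonneg _)
    rw [sub_nonneg]
    rw [show 2 * (x + 2) * Real.exp (-18 / x) * ((4 * x + 2) / S)
        = 2 * (x + 2) * Real.exp (-18 / x) * (4 * x + 2) / S by ring, div_mul_eq_mul_div,
      div_le_div_iff₀ hSpos (by positivity : (0:ℝ) < x ^ 2)]
    nlinarith [mul_le_mul_of_nonneg_left hkey (le_of_lt (mul_pos two_pos hE)), hE.le]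
end

section
/- For all real x ≥ 2, (2(x+2) / (√(4x²+4x+1081) − 33))^x ≤ e^{18}. -/
theorem Psi_le_exp18 (x : ℝ) (hx : 2 ≤ x) :
    (2 * (x + 2) / (Real.sqrt (4 * x ^ 2 + 4 * x + 1081) - 33)) ^ x ≤ Real.exp 18 := by
  have hx0 : (0:ℝ) < x := by linarith
  have hP : (0:ℝ) < x ^ 2 + 18 * x + 162 := by nlinarith
  set P : ℝ := x ^ 2 + 18 * x + 162 with hPdef
  set s : ℝ := Real.sqrt (4 * x ^ 2 + 4 * x + 1081) with hsdef
  have hD : (0:ℝ) ≤ 4 * x ^ 2 + 4 * x + 1081 := by nlinarith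
  have hR : (0:ℝ) ≤ 33 + 2 * x ^ 2 * (x + 2) / P := by positivity
  have hs : 33 + 2 * x ^ 2 * (x + 2) / P ≤ s := by
    rw [hsdef, (Real.le_sqrt hR hD),
      show 33 + 2 * x ^ 2 * (x + 2) / P = (33 * P + 2 * x ^ 2 * (x + 2)) / P by
        field_simp, div_pow, div_le_iff₀ (by positivity), hPdef]
    nlinarith [sq_nonneg (x - 2), sq_nonneg x, sq_nonneg ((x - 2) ^ 2), sq_nonneg (x * (x - 2))]
  have hq : 0 < 2 * x ^ 2 * (x + 2) / P := by positivity
  have hs33 : 2 * x ^ 2 * (x + 2) / P ≤ s - 33 := by linarith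
  have hspos : 0 < s - 33 := lt_of_lt_of_le hq hs33
  have hb : 2 * (x + 2) / (s - 33) ≤ P / x ^ 2 := by
    rw [div_le_div_iff₀ hspos (by positivity)]
    calc 2 * (x + 2) * x ^ 2 = 2 * x ^ 2 * (x + 2) / P * P := by field_simp
      _ ≤ (s - 33) * P := by
          exact mul_le_mul_of_nonneg_right hs33 hP.le
      _ = P * (s - 33) := by ring
  have hQ : P / x ^ 2 ≤ Real.exp (18 / x) := by
    have h1 := Real.quadratic_le_exp_of_nonneg (show (0:ℝ) ≤ 18 / x by positivity)
    have h2 : 1 + 18 / x + (18 / x) ^ 2 / 2 = P / x ^ 2 := by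
      rw [hPdef]; field_simp; ring
    linarith
  calc (2 * (x + 2) / (s - 33)) ^ x ≤ (Real.exp (18 / x)) ^ x :=
        Real.rpow_le_rpow (by positivity) (hb.trans hQ) hx0.le
    _ = Real.exp 18 := by
        rw [← Real.exp_mul, div_mul_cancel₀ _ hx0.ne']
end

section
/- For every real α ≥ 1, the function C_α(r) = (1/(4αr)) · ((1−r)/(1+r))^α · [1 − ((1−r)/(1+r))^{2α}] is strictly decreasing on the interval (0, 1). -/
open Set

private lemma slope_mono {s : ℝ} (hs : 1 < s) {t₁ t₂ : ℝ} (h0 : 0 < t₂) (hlt : t₂ < t₁)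
    (h1 : t₁ < 1) : (1 - t₂ ^ s) / (1 - t₂) < (1 - t₁ ^ s) / (1 - t₁) := by
  have key := (strictConvexOn_rpow hs).secant_strict_mono (a := (1 : ℝ)) (x := t₂) (y := t₁)
    (by simp) (le_of_lt h0) (le_of_lt (h0.trans hlt)) (by linarith) (by linarith) hlt
  simp only [Real.one_rpow] at key
  have e₂ : (t₂ ^ s - 1) / (t₂ - 1) = (1 - t₂ ^ s) / (1 - t₂) := by
    rw [← neg_div_neg_eq]; ring_nf
  have e₁ : (t₁ ^ s - 1) / (t₁ - 1) = (1 - t₁ ^ s) / (1 - t₁) := by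
    rw [← neg_div_neg_eq]; ring_nf
  rwa [e₁, e₂] at key

private lemma G_mono {α : ℝ} (hα : 1 ≤ α) {t₁ t₂ : ℝ} (h0 : 0 < t₂) (hlt : t₂ < t₁)
    (h1 : t₁ < 1) :
    t₂ ^ α * (1 + t₂) * ((1 - t₂ ^ (2 * α)) / (1 - t₂)) <
      t₁ ^ α * (1 + t₁) * ((1 - t₁ ^ (2 * α)) / (1 - t₁)) := by
  have h01 : 0 < t₁ := h0.trans hlt
  have h21 : t₂ < 1 := hlt.trans h1
  have hs : (1 : ℝ) < 2 * α := by linarith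
  have hpow : t₂ ^ α < t₁ ^ α := Real.rpow_lt_rpow h0.le hlt (by linarith)
  have hpow2 : t₂ ^ (2 * α) < 1 := Real.rpow_lt_one h0.le h21 (by linarith)
  have hpos2 : (0 : ℝ) < t₂ ^ α := Real.rpow_pos_of_pos h0 α
  have hq : (0 : ℝ) < (1 - t₂ ^ (2 * α)) / (1 - t₂) :=
    div_pos (by linarith) (by linarith)
  have hslope := slope_mono hs h0 hlt h1
  have step1 : t₂ ^ α * (1 + t₂) < t₁ ^ α * (1 + t₁) := by
    apply mul_lt_mul hpow (by linarith) (by linarith) (le_of_lt (Real.rpow_pos_of_pos h01 α))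
  exact mul_lt_mul step1 hslope.le hq
    (by positivity)

theorem C_alpha_strictAntiOn (α : ℝ) (hα : 1 ≤ α) :
    StrictAntiOn (fun r : ℝ =>
      (1 / (4 * α * r)) * ((1 - r) / (1 + r)) ^ α *
        (1 - ((1 - r) / (1 + r)) ^ (2 * α)))
      (Set.Ioo 0 1) := by
  have hα0 : (0 : ℝ) < α := by linarith
  -- rewrite f r in terms of t = (1-r)/(1+r)
  have key : ∀ r ∈ Set.Ioo (0:ℝ) 1,
      (1 / (4 * α * r)) * ((1 - r) / (1 + r)) ^ α *
        (1 - ((1 - r) / (1 + r)) ^ (2 * α)) =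
      (1 / (4 * α)) * (((1 - r) / (1 + r)) ^ α * (1 + (1 - r) / (1 + r)) *
        ((1 - ((1 - r) / (1 + r)) ^ (2 * α)) / (1 - (1 - r) / (1 + r)))) := by
    intro r hr
    obtain ⟨hr0, hr1⟩ := hr
    have h1r : (0:ℝ) < 1 + r := by linarith
    set A := ((1 - r) / (1 + r)) ^ α with hA
    set B := (1 - ((1 - r) / (1 + r)) ^ (2 * α)) with hB
    have hden : 1 - (1 - r) / (1 + r) = 2 * r / (1 + r) := by
      field_simp; ring
    rw [hden]
    field_simp
    ring
  intro r₁ hr₁ r₂ hr₂ hlt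
  obtain ⟨h₁0, h₁1⟩ := hr₁
  obtain ⟨h₂0, h₂1⟩ := hr₂
  simp only [key r₁ ⟨h₁0, h₁1⟩, key r₂ ⟨h₂0, h₂1⟩]
  have h1r₁ : (0:ℝ) < 1 + r₁ := by linarith
  have h1r₂ : (0:ℝ) < 1 + r₂ := by linarith
  set t₁ := (1 - r₁) / (1 + r₁) with ht₁
  set t₂ := (1 - r₂) / (1 + r₂) with ht₂
  have ht₂0 : 0 < t₂ := div_pos (by linarith) h1r₂
  have ht₁1 : t₁ < 1 := by
    rw [ht₁, div_lt_one h1r₁]; linarith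
  have htlt : t₂ < t₁ := by
    rw [ht₂, ht₁, div_lt_div_iff₀ h1r₂ h1r₁]
    nlinarith
  have := G_mono hα ht₂0 htlt ht₁1
  have hc : (0:ℝ) < 1 / (4 * α) := by positivity
  exact mul_lt_mul_of_pos_left this hc
end

section
/- Fix r ∈ (0,1) and a real number a > 1, and let n be a positive integer with −n·log r > 18·a·log n and n ≥ 2. Then Σ_{k=n+1}^∞ k^{18} r^{k−1} ≤ 18! · r^{n(a−1)/a − 2} / |log r|^{19}. -/
private lemma aux_two_terms (x : ℝ) (hx : 0 ≤ x) :
    x ^ 18 / (Nat.factorial 18 : ℝ) + x ^ 19 / (Nat.factorial 19 : ℝ) ≤ Real.exp x := by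
  have h := Real.sum_le_exp_of_nonneg hx 20
  rw [Finset.sum_range_succ, Finset.sum_range_succ] at h
  have h0 : (0:ℝ) ≤ ∑ i ∈ Finset.range 18, x ^ i / (Nat.factorial i : ℝ) := by positivity
  linarith

private lemma aux_log_ge_one (x : ℝ) (hx : 3 ≤ x) : 1 < Real.log x := by
  rw [Real.lt_log_iff_exp_lt (by linarith)]
  linarith [Real.exp_one_lt_d9]

set_option maxHeartbeats 1000000 in
private lemma aux_main (n : ℕ) (hn : 2 ≤ n) (a t : ℝ) (ha : 1 < a) (ht0 : 0 < t)
    (hbig : 18 * a * Real.log n < t * n) :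
    18 / ((n : ℝ) + 1) < t ∧
    ((n : ℝ) + 1) ^ 18 * t ^ 19 ≤
      (Nat.factorial 18 : ℝ) * Real.exp (2 * t) * (n : ℝ) ^ 18
        * (1 - Real.exp (18 / ((n : ℝ) + 1) - t)) := by
  have hn1 : (1:ℝ) < (n:ℝ) := by exact_mod_cast lt_of_lt_of_le one_lt_two hn
  have hn2 : (2:ℝ) ≤ (n:ℝ) := by exact_mod_cast hn
  have hlogn : 0 < Real.log n := Real.log_pos hn1
  have hlogn_t : 18 * Real.log n < t * n := by nlinarith
  have ht2 : (0:ℝ) < t + 2 := by linarith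
  have hfac18 : (Nat.factorial 18 : ℝ) = 6402373705728000 := by norm_num [Nat.factorial]
  have hfac19 : (Nat.factorial 19 : ℝ) = 121645100408832000 := by norm_num [Nat.factorial]
  rcases le_or_gt n 7 with h7 | h8
  · -- small n case
    have l2 := Real.log_two_gt_d9
    have l3 : 1 < Real.log 3 := aux_log_ge_one 3 (by norm_num)
    have l4 : 1 < Real.log 4 := aux_log_ge_one 4 (by norm_num)
    have l5 : 1 < Real.log 5 := aux_log_ge_one 5 (by norm_num)
    have l6 : 1 < Real.log 6 := aux_log_ge_one 6 (by norm_num)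
    have l7 : 1 < Real.log 7 := aux_log_ge_one 7 (by norm_num)
    have hkey : 18 / ((n : ℝ) + 1) + 0.238 ≤ t := by
      interval_cases n <;> push_cast at hlogn_t ⊢ <;> norm_num <;> nlinarith
    have hδ : 18 / ((n : ℝ) + 1) < t := by linarith
    refine ⟨hδ, ?_⟩
    -- 1 - ρ ≥ 1/5
    have c1 : (0.238:ℝ)/2 + 1 ≤ Real.exp (0.238/2) := Real.add_one_le_exp _
    have c2 : (5/4 : ℝ) ≤ Real.exp 0.238 := by
      have h2 : Real.exp (0.238 : ℝ) = Real.exp (0.238/2) ^ 2 := by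
        rw [← Real.exp_nat_mul]; norm_num
      rw [h2]
      nlinarith [Real.exp_pos ((0.238:ℝ)/2)]
    have c3 : Real.exp (18 / ((n : ℝ) + 1) - t) ≤ 4/5 := by
      have e1 : Real.exp (18 / ((n : ℝ) + 1) - t) ≤ Real.exp (-(0.238:ℝ)) :=
        Real.exp_le_exp.2 (by linarith)
      have e2 : Real.exp (-(0.238:ℝ)) ≤ 4/5 := by
        rw [Real.exp_neg]
        calc (Real.exp 0.238)⁻¹ ≤ (5/4 : ℝ)⁻¹ := by
              apply inv_anti₀ (by norm_num) c2
          _ = 4/5 := by norm_num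
      linarith
    have hP : (1/5 : ℝ) ≤ 1 - Real.exp (18 / ((n : ℝ) + 1) - t) := by linarith
    -- N^18 ≤ (3/2)^18 n^18
    have hN18 : ((n : ℝ) + 1) ^ 18 ≤ (3/2 : ℝ) ^ 18 * (n : ℝ) ^ 18 := by
      rw [← mul_pow]
      exact pow_le_pow_left₀ (by positivity) (by linarith) 18
    -- t^19 ≤ 19! exp(2t) / 2^19
    have h19 : (2*t) ^ 19 / (Nat.factorial 19 : ℝ) ≤ Real.exp (2*t) := by
      have h := aux_two_terms (2*t) (by linarith)
      have hnn : (0:ℝ) ≤ (2*t) ^ 18 / (Nat.factorial 18 : ℝ) := by positivity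
      linarith
    have ht19 : t ^ 19 ≤ (Nat.factorial 19 : ℝ) * Real.exp (2*t) / 2 ^ 19 := by
      have e19 : (2*t) ^ 19 = 524288 * t ^ 19 := by ring
      rw [e19, hfac19] at h19
      rw [le_div_iff₀ (by norm_num : (0:ℝ) < 2 ^ 19), hfac19]
      norm_num at h19 ⊢
      linarith
    have hM : (0:ℝ) ≤ (n : ℝ) ^ 18 := by positivity
    calc ((n : ℝ) + 1) ^ 18 * t ^ 19
        ≤ ((3/2 : ℝ) ^ 18 * (n : ℝ) ^ 18) * t ^ 19 := by
          exact mul_le_mul_of_nonneg_right hN18 (by positivity)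
      _ ≤ ((3/2 : ℝ) ^ 18 * (n : ℝ) ^ 18) * ((Nat.factorial 19 : ℝ) * Real.exp (2*t) / 2 ^ 19) := by
          apply mul_le_mul_of_nonneg_left ht19 (by positivity)
      _ = ((3/2 : ℝ) ^ 18 * (Nat.factorial 19 : ℝ) / 2 ^ 19) * ((n : ℝ) ^ 18 * Real.exp (2*t)) := by
          ring
      _ ≤ ((Nat.factorial 18 : ℝ) / 5) * ((n : ℝ) ^ 18 * Real.exp (2*t)) := by
          apply mul_le_mul_of_nonneg_right _ (by positivity)
          rw [hfac18, hfac19]; norm_num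
      _ = (Nat.factorial 18 : ℝ) * Real.exp (2*t) * (n : ℝ) ^ 18 * (1/5) := by ring
      _ ≤ (Nat.factorial 18 : ℝ) * Real.exp (2*t) * (n : ℝ) ^ 18
            * (1 - Real.exp (18 / ((n : ℝ) + 1) - t)) := by
          apply mul_le_mul_of_nonneg_left hP (by positivity)
  · -- large n case : n ≥ 8
    have hn8 : (8:ℝ) ≤ (n:ℝ) := by exact_mod_cast h8
    have hlog8 : (2:ℝ) ≤ Real.log n := by
      rw [Real.le_log_iff_exp_le (by linarith)]
      have h2 : Real.exp 2 ≤ 8 := by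
        have he := Real.exp_one_lt_d9
        have hpos := (Real.exp_pos (1:ℝ)).le
        have hmul : Real.exp 1 * Real.exp 1 ≤ (2.7182818286:ℝ) * 2.7182818286 :=
          mul_le_mul he.le he.le hpos (by norm_num)
        have h8 : (2.7182818286:ℝ) * 2.7182818286 ≤ 8 := by norm_num
        have hexp2 : Real.exp 2 = Real.exp 1 * Real.exp 1 := by
          rw [← Real.exp_add]; norm_num
        linarith
      linarith
    have h2a : (2:ℝ) < a * Real.log n := by nlinarith
    have h36 : (36:ℝ) < t * ((n:ℝ) + 1) := by nlinarith [hbig, ht0, h2a]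
    have hδ2 : 18 / ((n : ℝ) + 1) ≤ t / 2 := by
      rw [div_le_iff₀ (by linarith : (0:ℝ) < (n:ℝ) + 1)]
      linarith
    have hδ : 18 / ((n : ℝ) + 1) < t := by linarith
    refine ⟨hδ, ?_⟩
    -- 1 - ρ ≥ t/(t+2)
    have e1 : Real.exp (18 / ((n : ℝ) + 1) - t) ≤ Real.exp (-(t/2)) :=
      Real.exp_le_exp.2 (by linarith)
    have e2 : Real.exp (-(t/2)) ≤ 2/(t+2) := by
      rw [Real.exp_neg]
      have h1 : t/2 + 1 ≤ Real.exp (t/2) := Real.add_one_le_exp _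
      calc (Real.exp (t/2))⁻¹ ≤ (t/2 + 1)⁻¹ := by
            apply inv_anti₀ (by linarith) h1
        _ = 2/(t+2) := by field_simp
    have hP : t/(t+2) ≤ 1 - Real.exp (18 / ((n : ℝ) + 1) - t) := by
      have h1 : t/(t+2) + 2/(t+2) = 1 := by field_simp
      linarith
    -- N^18 ≤ 9 n^18
    have hN18 : ((n : ℝ) + 1) ^ 18 ≤ 9 * (n : ℝ) ^ 18 := by
      calc ((n : ℝ) + 1) ^ 18 ≤ (9/8 * (n : ℝ)) ^ 18 := by
            exact pow_le_pow_left₀ (by positivity) (by linarith) 18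
        _ = (9/8 : ℝ) ^ 18 * (n : ℝ) ^ 18 := by rw [mul_pow]
        _ ≤ 9 * (n : ℝ) ^ 18 := by
            apply mul_le_mul_of_nonneg_right (by norm_num) (by positivity)
    -- base : 9 t^18 (t+2) ≤ 18! exp(2t)
    have base : 9 * t ^ 18 * (t + 2) ≤ (Nat.factorial 18 : ℝ) * Real.exp (2*t) := by
      have h := aux_two_terms (2*t) (by linarith)
      rw [hfac18, hfac19] at h
      have e18 : (2*t) ^ 18 = 262144 * t ^ 18 := by ring
      have e19 : (2*t) ^ 19 = 524288 * t ^ 19 := by ring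
      rw [e18, e19] at h
      rw [hfac18]
      nlinarith [pow_nonneg ht0.le 18, pow_nonneg ht0.le 19]
    have step : 9 * t ^ 19 ≤ (Nat.factorial 18 : ℝ) * Real.exp (2*t) * (t/(t+2)) := by
      rw [← mul_div_assoc, le_div_iff₀ ht2]
      nlinarith [mul_le_mul_of_nonneg_right base ht0.le]
    have hM : (0:ℝ) ≤ (n : ℝ) ^ 18 := by positivity
    calc ((n : ℝ) + 1) ^ 18 * t ^ 19
        ≤ (9 * (n : ℝ) ^ 18) * t ^ 19 := mul_le_mul_of_nonneg_right hN18 (by positivity)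
      _ = (n : ℝ) ^ 18 * (9 * t ^ 19) := by ring
      _ ≤ (n : ℝ) ^ 18 * ((Nat.factorial 18 : ℝ) * Real.exp (2*t) * (t/(t+2))) :=
          mul_le_mul_of_nonneg_left step hM
      _ ≤ (n : ℝ) ^ 18 * ((Nat.factorial 18 : ℝ) * Real.exp (2*t)
            * (1 - Real.exp (18 / ((n : ℝ) + 1) - t))) := by
          apply mul_le_mul_of_nonneg_left _ hM
          apply mul_le_mul_of_nonneg_left hP (by positivity)
      _ = (Nat.factorial 18 : ℝ) * Real.exp (2*t) * (n : ℝ) ^ 18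
            * (1 - Real.exp (18 / ((n : ℝ) + 1) - t)) := by ring

set_option maxHeartbeats 1000000 in
theorem tail_sum_bound (r : ℝ) (hr : r ∈ Set.Ioo (0:ℝ) 1) (a : ℝ) (ha : 1 < a)
    (n : ℕ) (hn : 2 ≤ n) (hbig : -(n : ℝ) * Real.log r > 18 * a * Real.log n) :
    ∑' k : ℕ, ((n + 1 + k : ℕ) : ℝ) ^ 18 * r ^ (n + k) ≤
      (Nat.factorial 18 : ℝ) * r ^ ((n : ℝ) * (a - 1) / a - 2) / |Real.log r| ^ 19 := by
  obtain ⟨hr0, hr1⟩ := hr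
  have hlogr : Real.log r < 0 := Real.log_neg hr0 hr1
  set t : ℝ := -Real.log r with ht_def
  have ht0 : 0 < t := by simp only [ht_def]; linarith
  have habs : |Real.log r| = t := (abs_of_neg hlogr)
  have hr_eq : r = Real.exp (-t) := by
    rw [ht_def, neg_neg, Real.exp_log hr0]
  have hn1 : (1:ℝ) < (n:ℝ) := by exact_mod_cast lt_of_lt_of_le one_lt_two hn
  have hnR0 : (0:ℝ) < (n:ℝ) := by linarith
  have hlogn : 0 < Real.log n := Real.log_pos hn1
  have ha0 : 0 < a := lt_trans one_pos ha
  have ha' : a ≠ 0 := ne_of_gt ha0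
  have hbig' : 18 * a * Real.log n < t * n := by
    have heq : t * (n:ℝ) = -(n:ℝ) * Real.log r := by rw [ht_def]; ring
    rw [heq]; exact hbig
  obtain ⟨hδ, hstar⟩ := aux_main n hn a t ha ht0 hbig'
  set N : ℝ := (n:ℝ) + 1 with hN_def
  have hN0 : (0:ℝ) < N := by positivity
  set ρ : ℝ := Real.exp (18 / N - t) with hρ_def
  have hρ0 : 0 ≤ ρ := (Real.exp_pos _).le
  have hρ1 : ρ < 1 := by
    rw [hρ_def, Real.exp_lt_one_iff]
    linarith
  have hP0 : 0 < 1 - ρ := by linarith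
  -- termwise bound
  have hterm : ∀ k : ℕ, ((n + 1 + k : ℕ) : ℝ) ^ 18 * r ^ (n + k) ≤ (N ^ 18 * r ^ n) * ρ ^ k := by
    intro k
    have hcast : ((n + 1 + k : ℕ) : ℝ) = N + (k:ℝ) := by push_cast [hN_def]; ring
    have h2 : N + (k:ℝ) ≤ N * Real.exp ((k:ℝ)/N) := by
      have h := Real.add_one_le_exp ((k:ℝ)/N)
      have h' := mul_le_mul_of_nonneg_left h hN0.le
      calc N + (k:ℝ) = N * ((k:ℝ)/N + 1) := by field_simp; ring
        _ ≤ N * Real.exp ((k:ℝ)/N) := h'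
    have h3 : (N + (k:ℝ)) ^ 18 ≤ N ^ 18 * (Real.exp ((k:ℝ)/N)) ^ 18 := by
      calc (N + (k:ℝ)) ^ 18 ≤ (N * Real.exp ((k:ℝ)/N)) ^ 18 :=
            pow_le_pow_left₀ (by positivity) h2 18
        _ = N ^ 18 * (Real.exp ((k:ℝ)/N)) ^ 18 := by rw [mul_pow]
    have hρk : ρ ^ k = (Real.exp ((k:ℝ)/N)) ^ 18 * r ^ k := by
      rw [hρ_def, hr_eq, ← Real.exp_nat_mul, ← Real.exp_nat_mul, ← Real.exp_nat_mul, ← Real.exp_add]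
      congr 1
      ring
    calc ((n + 1 + k : ℕ) : ℝ) ^ 18 * r ^ (n + k)
        = (N + (k:ℝ)) ^ 18 * (r ^ n * r ^ k) := by rw [hcast, pow_add]
      _ ≤ (N ^ 18 * (Real.exp ((k:ℝ)/N)) ^ 18) * (r ^ n * r ^ k) := by
          apply mul_le_mul_of_nonneg_right h3
          positivity
      _ = (N ^ 18 * r ^ n) * ((Real.exp ((k:ℝ)/N)) ^ 18 * r ^ k) := by ring
      _ = (N ^ 18 * r ^ n) * ρ ^ k := by rw [hρk]
  have hg : Summable (fun k : ℕ => (N ^ 18 * r ^ n) * ρ ^ k) :=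
    (summable_geometric_of_lt_one hρ0 hρ1).mul_left _
  have hf : Summable (fun k : ℕ => ((n + 1 + k : ℕ) : ℝ) ^ 18 * r ^ (n + k)) := by
    apply Summable.of_nonneg_of_le _ hterm hg
    intro k
    have : (0:ℝ) ≤ r ^ (n + k) := pow_nonneg hr0.le _
    positivity
  have hle1 : ∑' k : ℕ, ((n + 1 + k : ℕ) : ℝ) ^ 18 * r ^ (n + k)
      ≤ ∑' k : ℕ, (N ^ 18 * r ^ n) * ρ ^ k := Summable.tsum_le_tsum hterm hf hg
  have hg_eq : ∑' k : ℕ, (N ^ 18 * r ^ n) * ρ ^ k = (N ^ 18 * r ^ n) * (1 - ρ)⁻¹ := by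
    rw [tsum_mul_left, tsum_geometric_of_lt_one hρ0 hρ1]
  -- right-hand side manipulations
  have hlogr_eq : Real.log r = -t := by rw [ht_def, neg_neg]
  have hrexp : r ^ ((n : ℝ) * (a - 1) / a - 2)
      = Real.exp (t * (n:ℝ) / a + 2 * t - t * (n:ℝ)) := by
    rw [Real.rpow_def_of_pos hr0, hlogr_eq]
    congr 1
    field_simp
    ring
  have hs : (n:ℝ) ^ 18 ≤ Real.exp (t * (n:ℝ) / a) := by
    have h1 : 18 * Real.log n < t * (n:ℝ) / a := by
      rw [lt_div_iff₀ ha0]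
      calc 18 * Real.log n * a = 18 * a * Real.log n := by ring
        _ < t * n := hbig'
    calc (n:ℝ) ^ 18 = (Real.exp (Real.log n)) ^ 18 := by rw [Real.exp_log hnR0]
      _ = Real.exp (18 * Real.log n) := by rw [← Real.exp_nat_mul]; norm_num
      _ ≤ Real.exp (t * (n:ℝ) / a) := Real.exp_le_exp.2 h1.le
  have hrn : r ^ n = Real.exp (-(t * (n:ℝ))) := by
    rw [hr_eq, ← Real.exp_nat_mul]
    congr 1
    ring
  have key : N ^ 18 * t ^ 19 / (1 - ρ) ≤
      (Nat.factorial 18 : ℝ) * Real.exp (t * (n:ℝ) / a) * Real.exp (2 * t) := by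
    rw [div_le_iff₀ hP0]
    calc N ^ 18 * t ^ 19
        ≤ (Nat.factorial 18 : ℝ) * Real.exp (2 * t) * (n:ℝ) ^ 18 * (1 - ρ) := hstar
      _ ≤ (Nat.factorial 18 : ℝ) * Real.exp (2 * t) * Real.exp (t * (n:ℝ) / a) * (1 - ρ) := by
          apply mul_le_mul_of_nonneg_right _ hP0.le
          apply mul_le_mul_of_nonneg_left hs (by positivity)
      _ = (Nat.factorial 18 : ℝ) * Real.exp (t * (n:ℝ) / a) * Real.exp (2 * t) * (1 - ρ) := by
          ring
  calc ∑' k : ℕ, ((n + 1 + k : ℕ) : ℝ) ^ 18 * r ^ (n + k)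
      ≤ (N ^ 18 * r ^ n) * (1 - ρ)⁻¹ := hle1.trans_eq hg_eq
    _ ≤ (Nat.factorial 18 : ℝ) * r ^ ((n : ℝ) * (a - 1) / a - 2) / |Real.log r| ^ 19 := by
        rw [habs, hrexp, hrn, le_div_iff₀ (by positivity : (0:ℝ) < t ^ 19)]
        have expand : N ^ 18 * Real.exp (-(t * (n:ℝ))) * (1 - ρ)⁻¹ * t ^ 19
            = (N ^ 18 * t ^ 19 / (1 - ρ)) * Real.exp (-(t * (n:ℝ))) := by
          field_simp
        rw [expand]
        calc (N ^ 18 * t ^ 19 / (1 - ρ)) * Real.exp (-(t * (n:ℝ)))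
            ≤ ((Nat.factorial 18 : ℝ) * Real.exp (t * (n:ℝ) / a) * Real.exp (2 * t))
                * Real.exp (-(t * (n:ℝ))) :=
              mul_le_mul_of_nonneg_right key (Real.exp_pos _).le
          _ = (Nat.factorial 18 : ℝ) * Real.exp (t * (n:ℝ) / a + 2 * t - t * (n:ℝ)) := by
              rw [show t * (n:ℝ) / a + 2 * t - t * (n:ℝ)
                  = (t * (n:ℝ) / a + 2 * t) + -(t * (n:ℝ)) from by ring,
                Real.exp_add, Real.exp_add]
              ring
end

section
/- Define U₁(r) = −log(r·(−log r)^{19}) − log[((1−r)/(1+r))^{17} − ((1−r)/(1+r))^{51}] for r ∈ (0,1). Then U₁'(r) = (1/r)(−1 − 19/log r) + (34/(1−r²))·(1 − 2/(((1+r)/(1−r))^{34} − 1)), and U₁ is strictly increasing on (0.017, 1). -/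
open Real Set

lemma U1_hasDerivAt {r : ℝ} (hr0 : 0 < r) (hr1 : r < 1) :
    HasDerivAt (fun r : ℝ =>
      -Real.log (r * (-Real.log r) ^ 19) -
        Real.log (((1 - r) / (1 + r)) ^ 17 - ((1 - r) / (1 + r)) ^ 51))
      ((1 / r) * (-1 - 19 / Real.log r) +
          (34 / (1 - r ^ 2)) * (1 - 2 / (((1 + r) / (1 - r)) ^ 34 - 1))) r := by
  have hL : Real.log r < 0 := Real.log_neg hr0 hr1
  have hrne : r ≠ 0 := hr0.ne'
  have h1p : (0:ℝ) < 1 + r := by linarith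
  have h1m : (0:ℝ) < 1 - r := by linarith
  set q : ℝ := (1 - r) / (1 + r) with hqdef
  have hq0 : 0 < q := div_pos h1m h1p
  have hq1 : q < 1 := by
    rw [div_lt_one h1p]; linarith
  have hs0 : 0 < q ^ 34 := pow_pos hq0 _
  have hs1 : q ^ 34 < 1 := pow_lt_one₀ hq0.le hq1 (by norm_num)
  -- derivative of q
  have hdq : HasDerivAt (fun r : ℝ => (1 - r) / (1 + r))
      ((-1 * (1 + r) - (1 - r) * 1) / (1 + r) ^ 2) r := by
    exact (((hasDerivAt_id r).const_sub 1).div ((hasDerivAt_id r).const_add 1) h1p.ne')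
  -- derivative of first piece
  have hneglog : HasDerivAt (fun r : ℝ => -Real.log r) (-r⁻¹) r :=
    (Real.hasDerivAt_log hrne).neg
  have hpow : HasDerivAt (fun r : ℝ => (-Real.log r) ^ 19)
      (19 * (-Real.log r) ^ 18 * -r⁻¹) r := hneglog.pow 19
  have hh : HasDerivAt (fun r : ℝ => r * (-Real.log r) ^ 19)
      (1 * (-Real.log r) ^ 19 + r * (19 * (-Real.log r) ^ 18 * -r⁻¹)) r :=
    (hasDerivAt_id r).mul hpow
  have hA : (0:ℝ) < -Real.log r := by linarith
  have hhne : r * (-Real.log r) ^ 19 ≠ 0 := by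
    exact mul_ne_zero hrne (pow_ne_zero _ hA.ne')
  have hlog1 : HasDerivAt (fun r : ℝ => Real.log (r * (-Real.log r) ^ 19))
      ((1 * (-Real.log r) ^ 19 + r * (19 * (-Real.log r) ^ 18 * -r⁻¹)) /
        (r * (-Real.log r) ^ 19)) r := hh.log hhne
  -- derivative of second piece
  set dq : ℝ := (-1 * (1 + r) - (1 - r) * 1) / (1 + r) ^ 2 with hdqdef
  have hg : HasDerivAt (fun r : ℝ => ((1 - r) / (1 + r)) ^ 17 - ((1 - r) / (1 + r)) ^ 51)
      (17 * ((1 - r) / (1 + r)) ^ 16 * dq - 51 * ((1 - r) / (1 + r)) ^ 50 * dq) r :=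
    (hdq.pow 17).sub (hdq.pow 51)
  have hgval : q ^ 17 - q ^ 51 = q ^ 17 * (1 - q ^ 34) := by ring
  have hgne : q ^ 17 - q ^ 51 ≠ 0 := by
    rw [hgval]
    exact (mul_pos (pow_pos hq0 _) (by linarith)).ne'
  have hlog2 : HasDerivAt
      (fun r : ℝ => Real.log (((1 - r) / (1 + r)) ^ 17 - ((1 - r) / (1 + r)) ^ 51))
      ((17 * ((1 - r) / (1 + r)) ^ 16 * dq - 51 * ((1 - r) / (1 + r)) ^ 50 * dq) /
        (((1 - r) / (1 + r)) ^ 17 - ((1 - r) / (1 + r)) ^ 51)) r := hg.log (by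
      simpa [← hqdef] using hgne)
  have := (hlog1.neg.sub hlog2)
  refine this.congr_deriv (Eq.symm ?_)
  rw [← hqdef]
  have hQ : (1 + r) / (1 - r) = q⁻¹ := by
    rw [hqdef, inv_div]
  have hr2 : 1 - r ^ 2 ≠ 0 := by nlinarith
  have hdqq : dq = q * (-2 / (1 - r ^ 2)) := by
    rw [hdqdef, hqdef]
    field_simp
    ring
  have hinv : (q ^ 34)⁻¹ - 1 ≠ 0 := by
    have : 1 < (q ^ 34)⁻¹ := (one_lt_inv₀ hs0).mpr hs1
    linarith
  have hqne : q ≠ 0 := hq0.ne'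
  have hs1' : 1 - q ^ 34 ≠ 0 := by linarith
  rw [hQ, hdqq, inv_pow]
  have hlogne : Real.log r ≠ 0 := hL.ne
  have hAne : -Real.log r ≠ 0 := hA.ne'
  field_simp
  ring

theorem U1_deriv_and_strictMono :
    let U₁ : ℝ → ℝ := fun r =>
      -Real.log (r * (-Real.log r) ^ 19) -
        Real.log (((1 - r) / (1 + r)) ^ 17 - ((1 - r) / (1 + r)) ^ 51)
    (∀ r ∈ Set.Ioo (0:ℝ) 1,
      HasDerivAt U₁
        ((1 / r) * (-1 - 19 / Real.log r) +
          (34 / (1 - r ^ 2)) * (1 - 2 / (((1 + r) / (1 - r)) ^ 34 - 1))) r) ∧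
    StrictMonoOn U₁ (Set.Ioo 0.017 1) := by
  intro U₁
  constructor
  · intro r hr
    exact U1_hasDerivAt hr.1 hr.2
  · apply strictMonoOn_of_deriv_pos (convex_Ioo _ _)
    · intro x hx
      have hx0 : (0:ℝ) < x := lt_trans (by norm_num) hx.1
      exact (U1_hasDerivAt hx0 hx.2).continuousAt.continuousWithinAt
    · rw [interior_Ioo]
      intro x hx
      have hx017 : (0.017:ℝ) < x := hx.1
      have hx1 : x < 1 := hx.2
      have hx0 : (0:ℝ) < x := lt_trans (by norm_num) hx017
      rw [(U1_hasDerivAt hx0 hx1).deriv]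
      have hL : Real.log x < 0 := Real.log_neg hx0 hx1
      -- log x > -19
      have hexp : Real.exp (-19) < x := by
        have h1 : Real.exp 19 = Real.exp 1 ^ 19 := by
          rw [← Real.exp_nat_mul]; norm_num
        have h2 : (2:ℝ) ^ 19 < Real.exp 1 ^ 19 := by
          apply pow_lt_pow_left₀ _ (by norm_num) (by norm_num)
          linarith [Real.exp_one_gt_d9]
        have h3 : Real.exp (-19) < 0.017 := by
          rw [Real.exp_neg]
          rw [inv_lt_comm₀ (Real.exp_pos _) (by norm_num)]
          rw [h1]
          calc (0.017:ℝ)⁻¹ < 2 ^ 19 := by norm_num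
          _ < _ := h2
        linarith
      have hL19 : -19 < Real.log x := by
        have := Real.log_lt_log (Real.exp_pos (-19)) hexp
        rwa [Real.log_exp] at this
      have ht1 : 0 < (1 / x) * (-1 - 19 / Real.log x) := by
        apply mul_pos (by positivity)
        have : 19 / Real.log x < -1 := by
          rw [div_lt_iff_of_neg hL]; linarith
        linarith
      have hx2 : (0:ℝ) < 1 - x ^ 2 := by nlinarith
      have hQ : (1017/983 : ℝ) < (1 + x) / (1 - x) := by
        rw [div_lt_div_iff₀ (by norm_num) (by linarith)]
        nlinarith
      have hQ3 : (3:ℝ) < ((1 + x) / (1 - x)) ^ 34 := by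
        calc (3:ℝ) < (1017/983 : ℝ) ^ 34 := by norm_num
        _ < ((1 + x) / (1 - x)) ^ 34 := by
            apply pow_lt_pow_left₀ hQ (by norm_num) (by norm_num)
      have ht2 : 0 < (34 / (1 - x ^ 2)) * (1 - 2 / (((1 + x) / (1 - x)) ^ 34 - 1)) := by
        apply mul_pos (by positivity)
        have : 2 / (((1 + x) / (1 - x)) ^ 34 - 1) < 1 := by
          rw [div_lt_one (by linarith)]; linarith
        linarith
      linarith
end
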